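/- arXiv:2410.16017 — 2 statements merged into one kernel-verified Lean document; each statement's English description precedes it below -/
import Mathlib

section
/- Let (Ω,𝒜,P) and (Θ,𝒯,Π̄) be probability spaces, let R : Θ × Ω → ℝ be jointly measurable and square-integrable with respect to the product measure Π̄ ⊗ P, and let v > 0. Suppose that for Π̄-almost every θ: ∫_Ω R(θ,ω) dP(ω) ≥ −v and Var_P(R(θ,·)) ≤ v. Then for every C > 0: P( { ω : ∫_Θ exp(R(θ,ω)) dΠ̄(θ) ≤ exp(−(1+C)v) } ) ≤ 1/(C²·v). -/
/-!
Write `Z ω = ∫ R(θ, ω) dΠ̄(θ)`. By Jensen's inequality for `exp`, `exp (Z ω) ≤ ∫ exp R(θ, ω) dΠ̄`,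
so the event in question forces `Z ≤ -(1 + C) v`. By Fubini `E Z ≥ -v`, and centring each
`R(θ, ·)` at its mean and applying Jensen to the square gives `Var Z ≤ ∫ Var_P R(θ, ·) dΠ̄ ≤ v`.
Chebyshev's inequality at distance `C v` below the mean concludes.
-/

open MeasureTheory ProbabilityTheory

section Jensen

variable {α : Type*} [MeasurableSpace α] {μ : Measure α} [IsProbabilityMeasure μ]

lemma sq_integral_le_integral_sq {f : α → ℝ} (hf : MemLp f 2 μ) :
    (∫ x, f x ∂μ) ^ 2 ≤ ∫ x, f x ^ 2 ∂μ := by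
  have h := variance_nonneg f μ
  rw [variance_eq_sub hf] at h
  simpa [Pi.pow_apply] using h

lemma ofReal_exp_integral_le_lintegral {f : α → ℝ} (hf : Integrable f μ) :
    ENNReal.ofReal (Real.exp (∫ x, f x ∂μ)) ≤ ∫⁻ x, ENNReal.ofReal (Real.exp (f x)) ∂μ := by
  have hexp_nonneg : 0 ≤ᵐ[μ] fun x => Real.exp (f x) := ae_of_all _ fun x => (Real.exp_pos _).le
  by_cases hexp : Integrable (fun x => Real.exp (f x)) μ
  · rw [← ofReal_integral_eq_lintegral_ofReal hexp hexp_nonneg]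
    exact ENNReal.ofReal_le_ofReal <| convexOn_exp.map_integral_le
      Real.continuous_exp.continuousOn isClosed_univ (ae_of_all _ fun _ => trivial) hf hexp
  · have h_top : ∫⁻ x, ENNReal.ofReal (Real.exp (f x)) ∂μ = ⊤ := by
      by_contra h
      exact hexp ((lintegral_ofReal_ne_top_iff_integrable
        (Real.continuous_exp.comp_aestronglyMeasurable hf.1) hexp_nonneg).1 h)
    simp [h_top]

end Jensen

section Prod

variable {α β : Type*} [MeasurableSpace α] [MeasurableSpace β]
  {μ : Measure α} {ν : Measure β} {f : α × β → ℝ}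

lemma ae_sq_integral_prod_le [IsFiniteMeasure μ] [IsProbabilityMeasure ν]
    (hf : MemLp f 2 (μ.prod ν)) :
    ∀ᵐ x ∂μ, (∫ y, f (x, y) ∂ν) ^ 2 ≤ ∫ y, f (x, y) ^ 2 ∂ν := by
  filter_upwards [(hf.integrable one_le_two).prod_right_ae, hf.integrable_sq.prod_right_ae]
    with x hx hx_sq
  exact sq_integral_le_integral_sq ((memLp_two_iff_integrable_sq hx.1).2 hx_sq)

lemma MeasureTheory.MemLp.integral_prod_left [IsFiniteMeasure μ] [IsProbabilityMeasure ν]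
    (hf : MemLp f 2 (μ.prod ν)) : MemLp (fun x => ∫ y, f (x, y) ∂ν) 2 μ := by
  have hmeas := hf.1.integral_prod_right'
  refine (memLp_two_iff_integrable_sq hmeas).2 <|
    hf.integrable_sq.integral_prod_left.mono' (hmeas.pow 2) ?_
  filter_upwards [ae_sq_integral_prod_le hf] with x hx
  rwa [Real.norm_eq_abs, abs_of_nonneg (sq_nonneg _)]

lemma MeasureTheory.MemLp.integral_prod_right [IsProbabilityMeasure μ] [IsFiniteMeasure ν]
    (hf : MemLp f 2 (μ.prod ν)) : MemLp (fun y => ∫ x, f (x, y) ∂μ) 2 ν :=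
  (hf.comp_measurePreserving Measure.measurePreserving_swap).integral_prod_left

lemma variance_integral_prod_right_le [IsProbabilityMeasure μ] [IsProbabilityMeasure ν]
    (hf : MemLp f 2 (μ.prod ν)) :
    variance (fun y => ∫ x, f (x, y) ∂μ) ν ≤ ∫ x, variance (fun y => f (x, y)) ν ∂μ := by
  set g : α → ℝ := fun x => ∫ y, f (x, y) ∂ν
  set S : α × β → ℝ := fun p => f p - g p.1
  have hf_int : Integrable f (μ.prod ν) := hf.integrable one_le_two
  have hS : MemLp S 2 (μ.prod ν) :=
    hf.sub (hf.integral_prod_left.comp_measurePreserving measurePreserving_fst)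
  have hmean : ∫ y, ∫ x, f (x, y) ∂μ ∂ν = ∫ x, g x ∂μ :=
    (integral_integral_swap (f := fun x y => f (x, y)) hf_int).symm
  have hcentre : ∀ᵐ y ∂ν, ∫ x, f (x, y) ∂μ - ∫ x, g x ∂μ = ∫ x, S (x, y) ∂μ := by
    filter_upwards [hf_int.prod_left_ae] with y hy
    exact (integral_sub hy hf_int.integral_prod_left).symm
  calc variance (fun y => ∫ x, f (x, y) ∂μ) ν
      = ∫ y, (∫ x, S (x, y) ∂μ) ^ 2 ∂ν := by
        rw [variance_eq_integral hf.integral_prod_right.1.aemeasurable, hmean]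
        exact integral_congr_ae (hcentre.mono fun y hy => congrArg (· ^ 2) hy)
    _ ≤ ∫ y, ∫ x, S (x, y) ^ 2 ∂μ ∂ν :=
        integral_mono_of_nonneg (ae_of_all _ fun _ => sq_nonneg _)
          hS.integrable_sq.integral_prod_right
          (ae_sq_integral_prod_le (hS.comp_measurePreserving Measure.measurePreserving_swap))
    _ = ∫ x, ∫ y, S (x, y) ^ 2 ∂ν ∂μ :=
        (integral_integral_swap (f := fun x y => S (x, y) ^ 2) hS.integrable_sq).symm
    _ = ∫ x, variance (fun y => f (x, y)) ν ∂μ := by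
        refine integral_congr_ae ?_
        filter_upwards [hf_int.prod_right_ae] with x hx
        rw [variance_eq_integral hx.1.aemeasurable]

end Prod

lemma meas_le_sub_le_variance_div_sq {Ω : Type*} [MeasurableSpace Ω] {P : Measure Ω}
    [IsProbabilityMeasure P] {X : Ω → ℝ} (hX : MemLp X 2 P) {a t : ℝ} (hmean : a ≤ P[X])
    (ht : 0 < t) :
    P {ω | X ω ≤ a - t} ≤ ENNReal.ofReal (variance X P / t ^ 2) := by
  refine le_trans (measure_mono fun ω (hω : X ω ≤ a - t) => ?_) (meas_ge_le_variance_div_sq hX ht)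
  show t ≤ |X ω - P[X]|
  exact le_abs.2 (Or.inr (by linarith))

theorem stmt_4_general {Ω Θ : Type*} [MeasurableSpace Ω] [MeasurableSpace Θ]
    (P : Measure Ω) [IsProbabilityMeasure P]
    (Pri : Measure Θ) [IsProbabilityMeasure Pri]
    (R : Θ × Ω → ℝ)
    (hR2 : MemLp R 2 (Pri.prod P))
    (v : ℝ) (hv : 0 < v)
    (hmean : ∀ᵐ θ ∂Pri, -v ≤ ∫ ω, R (θ, ω) ∂P)
    (hvar : ∀ᵐ θ ∂Pri, variance (fun ω => R (θ, ω)) P ≤ v) :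
    ∀ C : ℝ, 0 < C →
      P {ω | ∫⁻ θ, ENNReal.ofReal (Real.exp (R (θ, ω))) ∂Pri
            ≤ ENNReal.ofReal (Real.exp (-(1 + C) * v))}
        ≤ ENNReal.ofReal (1 / (C ^ 2 * v)) := by
  intro C hC
  set Z : Ω → ℝ := fun ω => ∫ θ, R (θ, ω) ∂Pri
  have hR_int : Integrable R (Pri.prod P) := hR2.integrable one_le_two
  have hZ_mean : -v ≤ P[Z] := by
    change -v ≤ ∫ ω, ∫ θ, R (θ, ω) ∂Pri ∂P
    rw [← integral_integral_swap (f := fun θ ω => R (θ, ω)) hR_int]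
    simpa using integral_mono_ae (integrable_const _) hR_int.integral_prod_left hmean
  have hZ_var : variance Z P ≤ v :=
    (variance_integral_prod_right_le hR2).trans <| by
      simpa using integral_mono_of_nonneg (ae_of_all _ fun _ => variance_nonneg _ _)
        (integrable_const v) hvar
  have hevent : {ω | ∫⁻ θ, ENNReal.ofReal (Real.exp (R (θ, ω))) ∂Pri
      ≤ ENNReal.ofReal (Real.exp (-(1 + C) * v))} ≤ᵐ[P] {ω | Z ω ≤ -v - C * v} := by
    filter_upwards [hR_int.prod_left_ae] with ω hω hle
    have h := (ofReal_exp_integral_le_lintegral hω).trans hle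
    rw [ENNReal.ofReal_le_ofReal_iff (Real.exp_nonneg _), Real.exp_le_exp] at h
    change Z ω ≤ -v - C * v
    linarith
  calc _ ≤ P {ω | Z ω ≤ -v - C * v} := measure_mono_ae hevent
    _ ≤ ENNReal.ofReal (variance Z P / (C * v) ^ 2) :=
        meas_le_sub_le_variance_div_sq hR2.integral_prod_right hZ_mean (by positivity)
    _ ≤ ENNReal.ofReal (1 / (C ^ 2 * v)) := by
        refine ENNReal.ofReal_le_ofReal ?_
        rw [div_le_div_iff₀ (by positivity) (by positivity)]
        nlinarith [sq_nonneg C, mul_pos hC hv]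

theorem stmt_4 {Ω Θ : Type*} [MeasurableSpace Ω] [MeasurableSpace Θ]
    (P : Measure Ω) [IsProbabilityMeasure P]
    (Pri : Measure Θ) [IsProbabilityMeasure Pri]
    (R : Θ × Ω → ℝ) (hRmeas : Measurable R)
    (hR2 : MemLp R 2 (Pri.prod P))
    (v : ℝ) (hv : 0 < v)
    (hmean : ∀ᵐ θ ∂Pri, -v ≤ ∫ ω, R (θ, ω) ∂P)
    (hvar : ∀ᵐ θ ∂Pri, variance (fun ω => R (θ, ω)) P ≤ v) :
    ∀ C : ℝ, 0 < C →
      P {ω | ∫⁻ θ, ENNReal.ofReal (Real.exp (R (θ, ω))) ∂Pri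
            ≤ ENNReal.ofReal (Real.exp (-(1 + C) * v))}
        ≤ ENNReal.ofReal (1 / (C ^ 2 * v)) :=
  stmt_4_general P Pri R hR2 v hv hmean hvar
end

section
/- Let γ₀, γ₁, γ₂ ∈ ℝ with γ₁ ≠ −1 and γ₂ ≠ 1, let y > 0, and let p : ℝ → ℝ be differentiable with p(s) > 0 for all s ∈ ℝ. Define A(t) = exp(γ₀)·((1−γ₂)/(1+γ₁))·( p(t)^{1+γ₁} − p(1)^{1+γ₁} ) + y^{1−γ₂} and S(t) = y − A(t)^{1/(1−γ₂)}, where x^r denotes the real power of a positive real x. Then S(1) = 0, and at every t ∈ ℝ with A(t) > 0, S is differentiable at t with derivative S'(t) = −exp(γ₀) · p(t)^{γ₁} · (y − S(t))^{γ₂} · p'(t). -/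
/-!
With `u = y - S = A ^ (1 / (1 - γ₂))` the equation reads `u' = g * u ^ γ₂`, where
`g = exp γ₀ * p ^ γ₁ * p'`. This is a Bernoulli equation, which the substitution
`A = u ^ (1 - γ₂)` linearizes to `A' = (1 - γ₂) * g`; the given `A` is the antiderivative
of the right-hand side normalized by `A 1 = y ^ (1 - γ₂)`, i.e. `S 1 = 0`.
-/

open Real

theorem HasDerivAt.rpow_one_div_of_eq_mul {A : ℝ → ℝ} {r g t : ℝ} (hr : r ≠ 0)
    (hA : HasDerivAt A (r * g) t) (hpos : 0 < A t) :
    HasDerivAt (fun s => A s ^ (1 / r)) (g * (A t ^ (1 / r)) ^ (1 - r)) t := by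
  refine (hA.rpow_const (p := 1 / r) (Or.inl hpos.ne')).congr_deriv ?_
  rw [← rpow_mul hpos.le]
  have hexp : 1 / r - 1 = 1 / r * (1 - r) := by field_simp
  rw [hexp]
  field_simp

theorem HasDerivAt.rpow_one_add {p : ℝ → ℝ} {p' a t : ℝ} (hp : HasDerivAt p p' t)
    (hpos : 0 < p t) :
    HasDerivAt (fun s => p s ^ (1 + a)) ((1 + a) * (p t ^ a * p')) t := by
  refine (hp.rpow_const (Or.inl hpos.ne')).congr_deriv ?_
  rw [add_sub_cancel_left]
  ring

theorem stmt_13 (γ₀ γ₁ γ₂ : ℝ) (h₁ : γ₁ ≠ -1) (h₂ : γ₂ ≠ 1)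
    (y : ℝ) (hy : 0 < y)
    (p : ℝ → ℝ) (hp : Differentiable ℝ p) (hppos : ∀ s, 0 < p s)
    (A S : ℝ → ℝ)
    (hA : ∀ t, A t = Real.exp γ₀ * ((1 - γ₂) / (1 + γ₁)) * (p t ^ (1 + γ₁) - p 1 ^ (1 + γ₁))
        + y ^ (1 - γ₂))
    (hS : ∀ t, S t = y - A t ^ (1 / (1 - γ₂))) :
    S 1 = 0 ∧ ∀ t : ℝ, 0 < A t →
      HasDerivAt S (-Real.exp γ₀ * p t ^ γ₁ * (y - S t) ^ γ₂ * deriv p t) t := by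
  have hγ₁ : 1 + γ₁ ≠ 0 := fun h => h₁ (by linarith)
  have hγ₂ : 1 - γ₂ ≠ 0 := sub_ne_zero.mpr h₂.symm
  refine ⟨by rw [hS, hA, sub_self, mul_zero, zero_add, ← rpow_mul hy.le, mul_one_div_cancel hγ₂,
    rpow_one, sub_self], fun t hAt => ?_⟩
  have hA' : HasDerivAt A ((1 - γ₂) * (exp γ₀ * p t ^ γ₁ * deriv p t)) t := by
    rw [funext hA]
    refine ((((hp t).hasDerivAt.rpow_one_add (hppos t)).sub_const _).const_mul _).add_const _
      |>.congr_deriv ?_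
    field_simp
  rw [hS t, sub_sub_cancel, funext hS]
  refine (hA'.rpow_one_div_of_eq_mul hγ₂ hAt).const_sub y |>.congr_deriv ?_
  rw [sub_sub_cancel]
  ring
end
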